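/- arXiv:2002.08064 — 3 statements merged into one kernel-verified Lean document; each statement's English description precedes it below -/
import Mathlib

section
/- Suppose the intersection E = ∩_{i=1}^n E_i is nonempty, and let P_* denote the orthogonal projection of ℝ^d onto E. Then along the projection consensus recursion with 0 < ε < 1/n, the quantity Σ_{i=1}^n P_*(x_i(t)) is invariant in time: Σ_{i=1}^n P_*(x_i(t+1)) = Σ_{i=1}^n P_*(x_i(t)) for all t ≥ 0. -/
noncomputable section

open Filter MeasureTheory Finset

/-- The integer (0-indexed) associated with a Boolean vector `x ∈ {0,1}^m`:
`⌊x⌋ - 1 = ∑_{k=1}^m x_k 2^{m-k}` (so the 1-indexed `⌊x⌋` is `flr m x + 1`). -/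
def flr (m : ℕ) (x : Fin m → Bool) : ℕ :=
  ∑ k : Fin m, if x k then 2 ^ (m - 1 - (k : ℕ)) else 0

/-- `deltaVec c i` is the `i`-th column of the `c × c` identity matrix (0-indexed). -/
def deltaVec (c : ℕ) (i : Fin c) : Fin c → ℝ := fun j => if j = i then 1 else 0

/-- `Δ_c`, the set of Boolean vectors in `ℝ^c`. -/
def DeltaSet (c : ℕ) : Set (Fin c → ℝ) := Set.range (deltaVec c)

/-- `Θ_m : {0,1}^m → Δ_{2^m}`, `Θ_m(x) = δ_{2^m}^{⌊x⌋}`. -/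
def theta (m : ℕ) (x : Fin m → Bool) : Fin (2 ^ m) → ℝ :=
  fun j => if (j : ℕ) = flr m x then 1 else 0

/-- `Υ_m : Δ_{2^m} → {0,1}^m`, the inverse of `Θ_m`. -/
def upsilon (m : ℕ) : (Fin (2 ^ m) → ℝ) → (Fin m → Bool) :=
  Function.invFun (theta m)

/-- Euclidean distance on `ℝ^N`. -/
def euclDist {N : ℕ} (x y : Fin N → ℝ) : ℝ := Real.sqrt (∑ j, (x j - y j) ^ 2)

/-- Euclidean distance from a point to a set in `ℝ^N`. -/
def distToSet {N : ℕ} (z : Fin N → ℝ) (S : Set (Fin N → ℝ)) : ℝ :=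
  sInf (euclDist z '' S)

/-- `P` is the (orthogonal/metric) projection onto the set `S ⊆ ℝ^N`: it maps every point to
a nearest point of `S` in the Euclidean distance. -/
def IsProjOn {N : ℕ} (P : (Fin N → ℝ) → (Fin N → ℝ)) (S : Set (Fin N → ℝ)) : Prop :=
  ∀ z, P z ∈ S ∧ ∀ w ∈ S, euclDist z (P z) ≤ euclDist z w

/-- The uniform distribution on the cube `[0,1]^d`. -/
def uniformCube (d : ℕ) : Measure (Fin d → ℝ) :=
  volume.restrict (Set.univ.pi fun _ => Set.Icc (0 : ℝ) 1)


/-! The intersection `⋂ i, E i` is an affine subspace and `P_*` is the orthogonal projection onto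
it, an affine map. Because `⋂ i, E i ⊆ E i`, we have `P_* ∘ P_i = P_*`, so `P_*` sees only the
arguments `x_i + ε ∑_{j ∈ N_i} (x_j - x_i)` of the `P_i`. Each edge contributes `x_j - x_i` and
`x_i - x_j` to the sum of the consensus terms, so these arguments have the same sum as the `x_i`,
and an affine map sends `n` points with equal sums to `n` images with equal sums. -/

open EuclideanGeometry

lemma euclDist_eq_dist {N : ℕ} (x y : Fin N → ℝ) :
    euclDist x y = dist (WithLp.toLp 2 x) (WithLp.toLp 2 y) := by
  simp [euclDist, EuclideanSpace.dist_eq, Real.dist_eq, sq_abs]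

lemma EuclideanGeometry.orthogonalProjection_eq_of_forall_dist_le {V P : Type*}
    [NormedAddCommGroup V] [InnerProductSpace ℝ V] [MetricSpace P] [NormedAddTorsor V P]
    {s : AffineSubspace ℝ P} [Nonempty s] [s.direction.HasOrthogonalProjection] {p q : P}
    (hq : q ∈ s) (hmin : ∀ w ∈ s, dist p q ≤ dist p w) :
    (orthogonalProjection s p : P) = q := by
  refine (dist_orthogonalProjection_eq_dist_iff_eq_of_mem hq).1 (le_antisymm ?_ ?_)
  · rw [dist_orthogonalProjection_eq_infDist]
    exact Metric.infDist_le_dist_of_mem hq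
  · exact hmin _ (orthogonalProjection_mem p)

lemma IsProjOn.toLp_eq_orthogonalProjection {N : ℕ} {P : (Fin N → ℝ) → (Fin N → ℝ)}
    {S : Set (Fin N → ℝ)} (hP : IsProjOn P S)
    {s : AffineSubspace ℝ (EuclideanSpace ℝ (Fin N))} [Nonempty s]
    (hs : ∀ y, WithLp.toLp 2 y ∈ s ↔ y ∈ S) (y : Fin N → ℝ) :
    WithLp.toLp 2 (P y) = orthogonalProjection s (WithLp.toLp 2 y) := by
  refine (orthogonalProjection_eq_of_forall_dist_le ((hs _).2 (hP y).1) fun w hw => ?_).symm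
  simpa only [euclDist_eq_dist] using (hP y).2 (WithLp.ofLp w) ((hs _).1 hw)

lemma AffineMap.sum_map_eq_of_sum_eq {k V₁ V₂ ι : Type*} [Ring k] [AddCommGroup V₁]
    [Module k V₁] [AddCommGroup V₂] [Module k V₂] (f : V₁ →ᵃ[k] V₂) {s : Finset ι}
    {y y' : ι → V₁} (h : ∑ i ∈ s, y i = ∑ i ∈ s, y' i) :
    ∑ i ∈ s, f (y i) = ∑ i ∈ s, f (y' i) := by
  have hf : ∀ v, f v = f.linear v + f 0 := fun v => by simpa using f.map_vadd 0 v
  rw [Finset.sum_congr rfl fun i _ => hf (y i), Finset.sum_congr rfl fun i _ => hf (y' i),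
    Finset.sum_add_distrib, Finset.sum_add_distrib, ← map_sum f.linear, ← map_sum f.linear, h]

lemma SimpleGraph.sum_sum_neighborFinset_sub {V M : Type*} [Fintype V] [AddCommGroup M]
    (G : SimpleGraph V) [DecidableRel G.Adj] (f : V → M) :
    ∑ i, ∑ j ∈ G.neighborFinset i, (f j - f i) = 0 := by
  rw [Finset.sum_congr rfl fun i _ => Finset.sum_sub_distrib _ _, Finset.sum_sub_distrib,
    sub_eq_zero]
  exact Finset.sum_comm' fun i j => by simp [G.adj_comm]

def Matrix.solutionSpace {k d : ℕ} (H : Matrix (Fin k) (Fin d) ℝ) (z : Fin k → ℝ) :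
    AffineSubspace ℝ (EuclideanSpace ℝ (Fin d)) :=
  (affineSpan ℝ {WithLp.toLp 2 z}).comap (Matrix.toEuclideanLin H).toAffineMap

lemma Matrix.toLp_mem_solutionSpace {k d : ℕ} (H : Matrix (Fin k) (Fin d) ℝ) (z : Fin k → ℝ)
    (y : Fin d → ℝ) :
    WithLp.toLp 2 y ∈ H.solutionSpace z ↔ H.mulVec y = z := by
  simp [Matrix.solutionSpace, AffineSubspace.mem_comap]

theorem stmt3_general (n d k : ℕ)
    (G : SimpleGraph (Fin n)) [DecidableRel G.Adj]
    (H : Fin n → Matrix (Fin k) (Fin d) ℝ) (z : Fin n → Fin k → ℝ)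
    (E : Fin n → Set (Fin d → ℝ))
    (hE : ∀ i, E i = {y | (H i).mulVec y = z i})
    (hInt : (⋂ i, E i).Nonempty)
    (P : Fin n → (Fin d → ℝ) → (Fin d → ℝ))
    (hP : ∀ i, IsProjOn (P i) (E i))
    (Pstar : (Fin d → ℝ) → (Fin d → ℝ))
    (hPstar : IsProjOn Pstar (⋂ i, E i))
    (ε : ℝ)
    (x : ℕ → Fin n → Fin d → ℝ)
    (hx : ∀ t i, x (t + 1) i =
      P i (x t i + ε • ∑ j ∈ G.neighborFinset i, (x t j - x t i))) :
    ∀ t : ℕ, ∑ i, Pstar (x (t + 1) i) = ∑ i, Pstar (x t i) := by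
  intro t
  set s := fun i => (H i).solutionSpace (z i)
  have hs : ∀ i y, WithLp.toLp 2 y ∈ s i ↔ y ∈ E i := fun i y => by
    simp [s, hE, Matrix.toLp_mem_solutionSpace]
  have hsInf : ∀ y, WithLp.toLp 2 y ∈ ⨅ i, s i ↔ y ∈ ⋂ i, E i := fun y => by
    simp [AffineSubspace.mem_iInf_iff, hs]
  obtain ⟨p, hp⟩ := hInt
  have : Nonempty ↥(⨅ i, s i) := ⟨⟨_, (hsInf p).2 hp⟩⟩
  have (i : Fin n) : Nonempty (s i) := ⟨⟨_, (hs i p).2 (Set.mem_iInter.1 hp i)⟩⟩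
  have hPstar_eq := hPstar.toLp_eq_orthogonalProjection hsInf
  have hPstar_comp (i : Fin n) (y : Fin d → ℝ) : Pstar (P i y) = Pstar y := by
    apply WithLp.toLp_injective 2
    rw [hPstar_eq, hPstar_eq, (hP i).toLp_eq_orthogonalProjection (hs i),
      orthogonalProjection_orthogonalProjection_of_le (iInf_le s i)]
  simp only [hx, hPstar_comp]
  apply WithLp.toLp_injective 2
  simp only [WithLp.toLp_sum, hPstar_eq]
  refine AffineMap.sum_map_eq_of_sum_eq
    ((⨅ i, s i).subtype.comp (orthogonalProjection (⨅ i, s i)).toAffineMap) ?_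
  rw [← WithLp.toLp_sum, ← WithLp.toLp_sum, Finset.sum_add_distrib, ← Finset.smul_sum,
    G.sum_sum_neighborFinset_sub, smul_zero, add_zero]

theorem stmt3 (n d k : ℕ) (hn : 0 < n)
    (G : SimpleGraph (Fin n)) [DecidableRel G.Adj] (hG : G.Connected)
    (H : Fin n → Matrix (Fin k) (Fin d) ℝ) (z : Fin n → Fin k → ℝ)
    (E : Fin n → Set (Fin d → ℝ))
    (hE : ∀ i, E i = {y | (H i).mulVec y = z i})
    (hEne : ∀ i, (E i).Nonempty)
    (hInt : (⋂ i, E i).Nonempty)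
    (P : Fin n → (Fin d → ℝ) → (Fin d → ℝ))
    (hP : ∀ i, IsProjOn (P i) (E i))
    (Pstar : (Fin d → ℝ) → (Fin d → ℝ))
    (hPstar : IsProjOn Pstar (⋂ i, E i))
    (ε : ℝ) (hε0 : 0 < ε) (hε1 : ε < 1 / n)
    (x : ℕ → Fin n → Fin d → ℝ)
    (hx : ∀ t i, x (t + 1) i =
      P i (x t i + ε • ∑ j ∈ G.neighborFinset i, (x t j - x t i))) :
    ∀ t : ℕ, ∑ i, Pstar (x (t + 1) i) = ∑ i, Pstar (x t i) :=
  stmt3_general n d k G H z E hE hInt P hP Pstar hPstar ε x hx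
end
end

section
/- Let f_i : {0,1}^m → {0,1} and σ_i ∈ {0,1} for i = 1,…,n, let χ_0 = Card{(f_1(x),…,f_n(x)) : x ∈ {0,1}^m}, and suppose E^b is nonempty. Then the dimension of the affine subspace E^b satisfies dim(E^b) ≥ 2^m − χ_0. -/
/-!
The vectors `Θ_m(x)` form the standard basis of `ℝ^{2^m}`, and the stacked map `y ↦ (M_i y)_i`
sends `Θ_m(x)` to `(Θ_1(f_i(x)))_i`, which depends only on the pattern `(f_i(x))_i`. So this map
takes at most `χ₀` distinct values on a basis and has rank at most `χ₀`. Since `E^b` is nonempty,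
its direction is the kernel of the map, and rank–nullity gives the bound.
-/

noncomputable section

open Filter MeasureTheory Finset

theorem AffineSubspace.direction_eq_ker_of_coe_eq {k V W : Type*} [Ring k] [AddCommGroup V]
    [Module k V] [AddCommGroup W] [Module k W] {s : AffineSubspace k V} {T : V →ₗ[k] W} {b : W}
    (hs : (s : Set V) = {y | T y = b}) {p : V} (hp : p ∈ s) :
    s.direction = LinearMap.ker T := by
  have hTp : T p = b := by rw [← SetLike.mem_coe, hs] at hp; exact hp
  ext v
  rw [← AffineSubspace.vadd_mem_iff_mem_direction v hp, ← SetLike.mem_coe, hs, LinearMap.mem_ker]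
  simp [vadd_eq_add, hTp]

theorem LinearMap.finrank_range_le_ncard_range {K V W ι κ : Type*} [DivisionRing K]
    [AddCommGroup V] [Module K V] [AddCommGroup W] [Module K W] [Finite ι]
    (T : V →ₗ[K] W) {v : ι → V} (hv : Submodule.span K (Set.range v) = ⊤) (g : ι → κ)
    (hg : Function.FactorsThrough (T ∘ v) g) :
    Module.finrank K (LinearMap.range T) ≤ (Set.range g).ncard := by
  classical
  have hrange : LinearMap.range T = Submodule.span K (Set.range (T ∘ v)) := by
    rw [LinearMap.range_eq_map, ← hv, Submodule.map_span, Set.range_comp]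
  have himage : Set.range (T ∘ v) = Function.extend g (T ∘ v) 0 '' Set.range g := by
    rw [← Set.range_comp]
    exact congrArg Set.range (funext fun i => (hg.extend_apply 0 i).symm)
  have : Fintype (Set.range (T ∘ v)) := Fintype.ofFinite _
  calc Module.finrank K (LinearMap.range T)
      ≤ (Set.range (T ∘ v)).ncard := by
        rw [hrange, Set.ncard_eq_toFinset_card']; exact finrank_span_le_card _
    _ ≤ (Set.range g).ncard := himage ▸ Set.ncard_image_le (Set.finite_range g)

/-- `x ↦ ⌊x⌋ - 1` as a bijection `{0,1}^m ≃ Fin (2^m)`: reverse the coordinates, so that `x 0` is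
the most significant bit, and read the result in base `2`. -/
def flrEquiv (m : ℕ) : (Fin m → Bool) ≃ Fin (2 ^ m) :=
  ((Equiv.piCongrLeft' (fun _ => Bool) Fin.revPerm).trans
    (Equiv.piCongrRight fun _ => finTwoEquiv.symm)).trans finFunctionFinEquiv

theorem flrEquiv_val {m : ℕ} (x : Fin m → Bool) : (flrEquiv m x : ℕ) = flr m x := by
  have hbit : ∀ b : Bool, ((finTwoEquiv.symm b : Fin 2) : ℕ) = if b then 1 else 0 := by decide
  simp only [flrEquiv, Equiv.trans_apply, finFunctionFinEquiv_apply, Equiv.piCongrRight_apply,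
    Pi.map_apply, Equiv.piCongrLeft'_apply, hbit]
  rw [flr, ← Equiv.sum_comp Fin.revPerm]
  refine Finset.sum_congr rfl fun k _ => ?_
  have hrev : ((Fin.revPerm k : Fin m) : ℕ) = m - 1 - k := by
    simp only [Fin.revPerm_apply, Fin.val_rev]; omega
  rw [Equiv.symm_apply_apply, hrev]
  cases x k <;> simp

theorem theta_eq_single (m : ℕ) (x : Fin m → Bool) : theta m x = Pi.single (flrEquiv m x) 1 := by
  ext j
  simp only [theta, Pi.single_apply, ← flrEquiv_val, Fin.val_inj]

theorem span_range_theta (m : ℕ) : Submodule.span ℝ (Set.range (theta m)) = ⊤ := by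
  have hrange : Set.range (theta m) = Set.range (Pi.basisFun ℝ (Fin (2 ^ m))) := by
    rw [← EquivLike.range_comp _ (flrEquiv m)]
    congr 1; ext x : 1
    rw [Function.comp_apply, Pi.basisFun_apply, theta_eq_single]
  rw [hrange, Module.Basis.span_eq]

theorem stmt12_general (m n : ℕ)
    (f : Fin n → (Fin m → Bool) → Bool) (σ : Fin n → Bool)
    (M : Fin n → Matrix (Fin 2) (Fin (2 ^ m)) ℝ)
    (hM : ∀ i x, (M i).mulVec (theta m x) = theta 1 (fun _ => f i x))
    (χ₀ : ℕ) (hχ₀ : χ₀ = (Set.range fun x : Fin m → Bool => fun i => f i x).ncard)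
    (EbA : AffineSubspace ℝ (Fin (2 ^ m) → ℝ))
    (hEbA : (EbA : Set (Fin (2 ^ m) → ℝ)) =
      {y | ∀ i, (M i).mulVec y = theta 1 (fun _ => σ i)})
    (hne : (EbA : Set (Fin (2 ^ m) → ℝ)).Nonempty) :
    2 ^ m - χ₀ ≤ Module.finrank ℝ EbA.direction := by
  obtain ⟨p, hp⟩ := hne
  let T : (Fin (2 ^ m) → ℝ) →ₗ[ℝ] (Fin n → Fin 2 → ℝ) := LinearMap.pi fun i => (M i).mulVecLin
  have hdir : EbA.direction = LinearMap.ker T :=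
    AffineSubspace.direction_eq_ker_of_coe_eq (b := fun i => theta 1 fun _ => σ i)
      (hEbA.trans (by ext y; simp [T, funext_iff])) hp
  have hT : Function.FactorsThrough (T ∘ theta m) fun x i => f i x := fun x y hxy => by
    ext i : 1
    simp only [Function.comp_apply, T, LinearMap.pi_apply, Matrix.mulVecLin_apply, hM,
      congrFun hxy i]
  have hrank := T.finrank_range_le_ncard_range (span_range_theta m) _ hT
  have hsum := T.finrank_range_add_finrank_ker
  rw [Module.finrank_fintype_fun_eq_card, Fintype.card_fin] at hsum
  rw [hdir]
  omega

theorem stmt12 (m n : ℕ) (hm : 0 < m)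
    (f : Fin n → (Fin m → Bool) → Bool) (σ : Fin n → Bool)
    (M : Fin n → Matrix (Fin 2) (Fin (2 ^ m)) ℝ)
    (hM : ∀ i x, (M i).mulVec (theta m x) = theta 1 (fun _ => f i x))
    (χ₀ : ℕ) (hχ₀ : χ₀ = (Set.range fun x : Fin m → Bool => fun i => f i x).ncard)
    (EbA : AffineSubspace ℝ (Fin (2 ^ m) → ℝ))
    (hEbA : (EbA : Set (Fin (2 ^ m) → ℝ)) =
      {y | ∀ i, (M i).mulVec y = theta 1 (fun _ => σ i)})
    (hne : (EbA : Set (Fin (2 ^ m) → ℝ)).Nonempty) :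
    2 ^ m - χ₀ ≤ Module.finrank ℝ EbA.direction :=
  stmt12_general m n f σ M hM χ₀ hχ₀ EbA hEbA hne
end
end

section
/- (Lemma 7) Suppose the stacked system of linear equations H_i y = z_i, i = 1,…,n, has no solution, i.e., ∩_{i=1}^n E_i = ∅, while each E_i is nonempty. Then along the projection consensus recursion over the connected graph G with 0 < ε < 1/n and arbitrary initial values: (i) for each node i, the state x_i(t) converges to a finite limit y_i^* ∈ ℝ^d as t → ∞; and (ii) there exist at least two nodes j, k ∈ V with y_j^* ≠ y_k^*. -/
noncomputable section

open Filter MeasureTheory Finset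

/-!
The stacked state `X = (x_i)_i` obeys an affine recursion `X ↦ c + M X`, where `M` applies the
consensus step `v_i + ε ∑_{j ~ i} (v_j - v_i)` and then, at each node, the orthogonal projection
`Q_i` onto `ker H_i`, the direction of `E_i`; the offset `c` collects the components of points
of the `E_i` orthogonal to these directions. Summing by parts and Cauchy–Schwarz show that the
consensus step loses at least `ε² ∑_{i ~ j} ‖v_i - v_j‖²` of squared norm when `ε n ≤ 1`, and the
projections lose `∑ ‖v_i - Q_i v_i‖²`. Hence `M` is nonexpansive, and `‖M v‖ = ‖v‖` forces `v` to
be a consensus vector fixed by every projection (the graph being connected), so `M v = v`.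

For such an `M` the increments `X (t+1) - X t` lie in the orthogonal complement of the fixed
space (which is also fixed by the adjoint of `M`, and `c` is orthogonal to it), where `M`
contracts by a factor `r < 1` by compactness of the unit ball. The increments therefore decay
geometrically and the iterates converge. A consensus limit would be a fixed point of every `P_i`,
i.e. a common point of all the `E_i`.
-/

open Topology
open WithLp (toLp ofLp)

namespace LinearMap

variable {E : Type*} [NormedAddCommGroup E] [InnerProductSpace ℝ E] [FiniteDimensional ℝ E]

theorem adjoint_apply_eq_self_of_norm_map_le {M : E →ₗ[ℝ] E} (hM : ∀ v, ‖M v‖ ≤ ‖v‖) {f : E}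
    (hf : M f = f) : M.adjoint f = f := by
  have hnorm : ‖M.adjoint f‖ ≤ ‖f‖ := by
    rcases eq_or_ne (M.adjoint f) 0 with h | h
    · simp [h]
    have : ‖M.adjoint f‖ ^ 2 ≤ ‖f‖ * ‖M.adjoint f‖ :=
      calc ‖M.adjoint f‖ ^ 2 = inner ℝ f (M (M.adjoint f)) := by
            rw [← adjoint_inner_left, real_inner_self_eq_norm_sq]
        _ ≤ ‖f‖ * ‖M (M.adjoint f)‖ := real_inner_le_norm _ _
        _ ≤ ‖f‖ * ‖M.adjoint f‖ := by gcongr; exact hM _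
    nlinarith [norm_pos_iff.2 h]
  refine eq_of_norm_le_re_inner_eq_norm_sq (𝕜 := ℝ) hnorm ?_
  rw [RCLike.re_to_real, adjoint_inner_left, hf, real_inner_self_eq_norm_sq]

theorem exists_lt_one_forall_norm_map_le (M : E →ₗ[ℝ] E) (K : Submodule ℝ E)
    (hK : ∀ u ∈ K, u ≠ 0 → ‖M u‖ < ‖u‖) : ∃ r, 0 ≤ r ∧ r < 1 ∧ ∀ u ∈ K, ‖M u‖ ≤ r * ‖u‖ := by
  have hB : IsCompact (Metric.closedBall (0 : E) 1 ∩ K) :=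
    (isCompact_closedBall 0 1).inter_right K.closed_of_finiteDimensional
  obtain ⟨u₀, ⟨hu₀1, hu₀K⟩, hmax⟩ := hB.exists_isMaxOn ⟨0, by simp, K.zero_mem⟩
    M.continuous_of_finiteDimensional.norm.continuousOn
  refine ⟨‖M u₀‖, norm_nonneg _, ?_, fun u hu => ?_⟩
  · rcases eq_or_ne u₀ 0 with h | h
    · simp [h]
    · exact (hK u₀ hu₀K h).trans_le (mem_closedBall_zero_iff.1 hu₀1)
  rcases eq_or_ne u 0 with rfl | hu0
  · simp
  have hunit : ‖u‖⁻¹ • u ∈ Metric.closedBall (0 : E) 1 ∩ K :=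
    ⟨by simp [norm_smul, hu0], K.smul_mem _ hu⟩
  have := hmax hunit
  simp only [Set.mem_ofPred_eq, map_smul, norm_smul, norm_inv, norm_norm] at this
  calc ‖M u‖ = ‖u‖ * (‖u‖⁻¹ * ‖M u‖) := by field_simp
    _ ≤ ‖u‖ * ‖M u₀‖ := by gcongr
    _ = ‖M u₀‖ * ‖u‖ := mul_comm _ _

theorem exists_tendsto_of_affine_recursion (M : E →ₗ[ℝ] E) (hle : ∀ v, ‖M v‖ ≤ ‖v‖)
    (heq : ∀ v, ‖M v‖ = ‖v‖ → M v = v) {c : E} (hc : ∀ f, M f = f → inner ℝ f c = 0)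
    {x : ℕ → E} (hx : ∀ t, x (t + 1) = c + M (x t)) : ∃ y, Tendsto x atTop (𝓝 y) := by
  set K := (ker (M - 1))ᗮ
  have hstep : ∀ t, x (t + 1) - x t ∈ K := fun t f hf => by
    have hMf : M f = f := by simpa [sub_eq_zero] using hf
    rw [hx, add_sub_assoc, inner_add_right, hc f hMf, inner_sub_right, ← adjoint_inner_left,
      adjoint_apply_eq_self_of_norm_map_le hle hMf, sub_self, add_zero]
  have hstrict : ∀ u ∈ K, u ≠ 0 → ‖M u‖ < ‖u‖ := fun u hu hu0 => by
    refine (hle u).lt_of_ne fun h => hu0 ?_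
    have : u ∈ ker (M - 1) ⊓ K := ⟨by simpa [sub_eq_zero] using heq u h, hu⟩
    rwa [Submodule.inf_orthogonal_eq_bot, Submodule.mem_bot] at this
  obtain ⟨r, hr0, hr1, hr⟩ := exists_lt_one_forall_norm_map_le M K hstrict
  have hdecay : ∀ t, ‖x (t + 1) - x t‖ ≤ ‖x 1 - x 0‖ * r ^ t := by
    intro t
    induction t with
    | zero => simp
    | succ t ih =>
      have : x (t + 2) - x (t + 1) = M (x (t + 1) - x t) := by
        rw [hx (t + 1), hx t, map_sub]; abel
      calc ‖x (t + 2) - x (t + 1)‖ ≤ r * ‖x (t + 1) - x t‖ := this ▸ hr _ (hstep t)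
        _ ≤ r * (‖x 1 - x 0‖ * r ^ t) := by gcongr
        _ = ‖x 1 - x 0‖ * r ^ (t + 1) := by ring
  exact cauchySeq_tendsto_of_complete <| cauchySeq_of_le_geometric r _ hr1 fun t => by
    rw [dist_comm, dist_eq_norm]; exact hdecay t

end LinearMap

theorem eq_of_tendsto_of_forall_succ_eq {β : Type*} [TopologicalSpace β] [T2Space β]
    {F : β → β} (hF : Continuous F) {x : ℕ → β} (hx : ∀ t, x (t + 1) = F (x t)) {y : β}
    (hy : Tendsto x atTop (𝓝 y)) : F y = y :=
  tendsto_nhds_unique ((hF.tendsto y).comp hy) <| by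
    simpa only [Function.comp_def, hx] using hy.comp (tendsto_add_atTop_nat 1)

theorem norm_sum_sq_le_card_mul {ι V : Type*} [SeminormedAddCommGroup V] (s : Finset ι)
    (u : ι → V) : ‖∑ j ∈ s, u j‖ ^ 2 ≤ #s * ∑ j ∈ s, ‖u j‖ ^ 2 :=
  (pow_le_pow_left₀ (norm_nonneg _) (norm_sum_le s u) 2).trans (sq_sum_le_card_mul_sum_sq ..)

namespace SimpleGraph

variable {α V : Type*}

theorem Connected.eq_of_forall_adj_eq {G : SimpleGraph α} {β : Type*} (hG : G.Connected)
    {v : α → β} (hv : ∀ i j, G.Adj i j → v i = v j) (i j : α) : v i = v j := by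
  obtain ⟨p⟩ := hG.preconnected i j
  induction p with
  | nil => rfl
  | cons hadj _ ih => exact (hv _ _ hadj).trans ih

variable [Fintype α] (G : SimpleGraph α) [DecidableRel G.Adj]

def consensusStep [AddCommGroup V] [Module ℝ V] (ε : ℝ) (v : α → V) (i : α) : V :=
  v i + ε • ∑ j ∈ G.neighborFinset i, (v j - v i)

variable {G}

theorem consensusStep_of_forall_eq [AddCommGroup V] [Module ℝ V] (ε : ℝ) {v : α → V}
    (hv : ∀ i j, v i = v j) (i : α) : G.consensusStep ε v i = v i := by
  simp [consensusStep, hv _ i]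

theorem sum_sum_neighborFinset_comm {M : Type*} [AddCommMonoid M] (f : α → α → M) :
    ∑ i, ∑ j ∈ G.neighborFinset i, f i j = ∑ i, ∑ j ∈ G.neighborFinset i, f j i :=
  Finset.sum_comm' fun i j => by simp [adj_comm]

theorem continuous_consensusStep_apply [AddCommGroup V] [Module ℝ V] [TopologicalSpace V]
    [IsTopologicalAddGroup V] [ContinuousSMul ℝ V] (ε : ℝ) (i : α) :
    Continuous fun v : α → V => G.consensusStep ε v i := by
  unfold consensusStep
  fun_prop

variable [NormedAddCommGroup V] [InnerProductSpace ℝ V]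

theorem two_mul_sum_inner_sum_neighborFinset_sub (v : α → V) :
    2 * ∑ i, inner ℝ (v i) (∑ j ∈ G.neighborFinset i, (v j - v i))
      = -∑ i, ∑ j ∈ G.neighborFinset i, ‖v j - v i‖ ^ 2 := by
  simp_rw [inner_sum, two_mul]
  nth_rw 2 [sum_sum_neighborFinset_comm]
  rw [← sum_add_distrib, ← sum_neg_distrib]
  refine sum_congr rfl fun i _ => ?_
  rw [← sum_add_distrib, ← sum_neg_distrib]
  refine sum_congr rfl fun j _ => ?_
  rw [← real_inner_self_eq_norm_sq]
  simp only [inner_sub_left, inner_sub_right, real_inner_comm (v i) (v j)]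
  ring

theorem sum_norm_sq_consensusStep_add_le {ε : ℝ} (hε0 : 0 ≤ ε)
    (hεn : ε * Fintype.card α ≤ 1) (v : α → V) :
    ∑ i, ‖G.consensusStep ε v i‖ ^ 2 + ε ^ 2 * ∑ i, ∑ j ∈ G.neighborFinset i, ‖v j - v i‖ ^ 2
      ≤ ∑ i, ‖v i‖ ^ 2 := by
  set e : α → ℝ := fun i => ∑ j ∈ G.neighborFinset i, ‖v j - v i‖ ^ 2
  have hvertex : ∀ i, ‖G.consensusStep ε v i‖ ^ 2 ≤ ‖v i‖ ^ 2
      + 2 * ε * inner ℝ (v i) (∑ j ∈ G.neighborFinset i, (v j - v i))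
      + ε ^ 2 * ((Fintype.card α - 1) * e i) := by
    intro i
    have hdeg : (G.degree i : ℝ) ≤ Fintype.card α - 1 := by
      have := G.degree_lt_card_verts i
      rw [le_sub_iff_add_le]; exact_mod_cast this
    have hcs := norm_sum_sq_le_card_mul (G.neighborFinset i) (fun j => v j - v i)
    rw [card_neighborFinset_eq_degree] at hcs
    rw [consensusStep, norm_add_sq_real, inner_smul_right, norm_smul, mul_pow,
      Real.norm_eq_abs, sq_abs]
    have he : 0 ≤ e i := sum_nonneg fun _ _ => sq_nonneg _
    nlinarith [mul_le_mul_of_nonneg_right hdeg he, sq_nonneg ε]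
  have hsum := sum_le_sum fun i (_ : i ∈ univ) => hvertex i
  rw [sum_add_distrib, sum_add_distrib, ← mul_sum, ← mul_sum, ← mul_sum] at hsum
  have hinner := two_mul_sum_inner_sum_neighborFinset_sub (G := G) v
  have he : 0 ≤ ∑ i, e i := sum_nonneg fun i _ => sum_nonneg fun _ _ => sq_nonneg _
  nlinarith [mul_nonneg (mul_nonneg hε0 he) (sub_nonneg.2 hεn)]

variable (G) in
def projectedConsensusStep (ε : ℝ) (D : α → Submodule ℝ V)
    [∀ i, (D i).HasOrthogonalProjection] :
    PiLp 2 (fun _ : α => V) →ₗ[ℝ] PiLp 2 (fun _ : α => V) where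
  toFun v := toLp 2 fun i => (D i).starProjection (G.consensusStep ε v.ofLp i)
  map_add' v w := by
    ext i
    simp only [consensusStep, PiLp.add_apply, ← map_add]
    congr 1
    simp only [add_sub_add_comm, sum_add_distrib, smul_add]
    abel
  map_smul' r v := by
    ext i
    simp only [consensusStep, PiLp.smul_apply, ← map_smul,
      RingHom.id_apply, ← smul_sub, ← smul_sum, smul_add, smul_comm ε r]

variable {ε : ℝ} {D : α → Submodule ℝ V} [∀ i, (D i).HasOrthogonalProjection]

@[simp]
theorem projectedConsensusStep_apply (v : PiLp 2 (fun _ : α => V)) (i : α) :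
    G.projectedConsensusStep ε D v i = (D i).starProjection (G.consensusStep ε v.ofLp i) :=
  rfl

theorem norm_sq_projectedConsensusStep_add_le (hε0 : 0 ≤ ε) (hεn : ε * Fintype.card α ≤ 1)
    (v : PiLp 2 (fun _ : α => V)) :
    ‖G.projectedConsensusStep ε D v‖ ^ 2 + ∑ i, ‖(D i)ᗮ.starProjection (G.consensusStep ε v i)‖ ^ 2
      + ε ^ 2 * ∑ i, ∑ j ∈ G.neighborFinset i, ‖v j - v i‖ ^ 2 ≤ ‖v‖ ^ 2 := by
  have hpyth : ∀ i, ‖G.projectedConsensusStep ε D v i‖ ^ 2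
      + ‖(D i)ᗮ.starProjection (G.consensusStep ε v i)‖ ^ 2 = ‖G.consensusStep ε v i‖ ^ 2 :=
    fun i => (Submodule.norm_sq_eq_add_norm_sq_starProjection _ (D i)).symm
  rw [PiLp.norm_sq_eq_of_L2, PiLp.norm_sq_eq_of_L2, ← sum_add_distrib,
    sum_congr rfl fun i _ => hpyth i]
  exact sum_norm_sq_consensusStep_add_le hε0 hεn _

theorem norm_projectedConsensusStep_le (hε0 : 0 ≤ ε) (hεn : ε * Fintype.card α ≤ 1)
    (v : PiLp 2 (fun _ : α => V)) : ‖G.projectedConsensusStep ε D v‖ ≤ ‖v‖ := by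
  have hle := norm_sq_projectedConsensusStep_add_le (G := G) (D := D) hε0 hεn v
  have hP : 0 ≤ ∑ i, ‖(D i)ᗮ.starProjection (G.consensusStep ε v i)‖ ^ 2 :=
    sum_nonneg fun _ _ => sq_nonneg _
  have hE : 0 ≤ ∑ i, ∑ j ∈ G.neighborFinset i, ‖v j - v i‖ ^ 2 :=
    sum_nonneg fun _ _ => sum_nonneg fun _ _ => sq_nonneg _
  exact pow_le_pow_iff_left₀ (norm_nonneg _) (norm_nonneg _) two_ne_zero |>.1 <| by
    nlinarith [mul_nonneg (sq_nonneg ε) hE]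

theorem projectedConsensusStep_eq_self_of_norm_eq (hG : G.Connected) (hε0 : 0 < ε)
    (hεn : ε * Fintype.card α ≤ 1) {v : PiLp 2 (fun _ : α => V)}
    (hv : ‖G.projectedConsensusStep ε D v‖ = ‖v‖) : G.projectedConsensusStep ε D v = v := by
  have hle := norm_sq_projectedConsensusStep_add_le (G := G) (D := D) hε0.le hεn v
  rw [hv] at hle
  have hP : 0 ≤ ∑ i, ‖(D i)ᗮ.starProjection (G.consensusStep ε v i)‖ ^ 2 :=
    sum_nonneg fun _ _ => sq_nonneg _
  have hE : 0 ≤ ∑ i, ∑ j ∈ G.neighborFinset i, ‖v j - v i‖ ^ 2 :=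
    sum_nonneg fun _ _ => sum_nonneg fun _ _ => sq_nonneg _
  have hP0 : ∑ i, ‖(D i)ᗮ.starProjection (G.consensusStep ε v i)‖ ^ 2 = 0 := by
    nlinarith [sq_nonneg ε]
  have hE0 : ∑ i, ∑ j ∈ G.neighborFinset i, ‖v j - v i‖ ^ 2 = 0 := by
    nlinarith [mul_nonneg (sq_nonneg ε) hE, pow_pos hε0 2]
  have hcons : ∀ i j, v i = v j := by
    refine hG.eq_of_forall_adj_eq fun i j hij => ?_
    have := (sum_eq_zero_iff_of_nonneg fun _ _ => sum_nonneg fun _ _ => sq_nonneg _).1 hE0 i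
      (mem_univ i)
    have := (sum_eq_zero_iff_of_nonneg fun _ _ => sq_nonneg _).1 this j (by simpa using hij)
    rw [sq_eq_zero_iff, norm_eq_zero, sub_eq_zero] at this
    exact this.symm
  ext i
  have := (sum_eq_zero_iff_of_nonneg fun _ _ => sq_nonneg _).1 hP0 i (mem_univ i)
  rw [consensusStep_of_forall_eq ε hcons, sq_eq_zero_iff, norm_eq_zero,
    Submodule.starProjection_orthogonal_val, sub_eq_zero] at this
  rw [projectedConsensusStep_apply, consensusStep_of_forall_eq ε hcons, ← this]

theorem inner_eq_zero_of_projectedConsensusStep_eq_self {c f : PiLp 2 (fun _ : α => V)}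
    (hc : ∀ i, c i ∈ (D i)ᗮ) (hf : G.projectedConsensusStep ε D f = f) : inner ℝ f c = 0 := by
  rw [PiLp.inner_apply]
  refine sum_eq_zero fun i _ => hc i _ ?_
  rw [← hf, projectedConsensusStep_apply]
  exact Submodule.starProjection_apply_mem _ _

theorem exists_tendsto_of_projectedConsensus_recursion [FiniteDimensional ℝ V]
    (hG : G.Connected) (hε0 : 0 < ε) (hεn : ε * Fintype.card α ≤ 1)
    {c : PiLp 2 (fun _ : α => V)} (hc : ∀ i, c i ∈ (D i)ᗮ) {X : ℕ → PiLp 2 (fun _ : α => V)}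
    (hX : ∀ t, X (t + 1) = c + G.projectedConsensusStep ε D (X t)) :
    ∃ Y, Tendsto X atTop (𝓝 Y) :=
  (G.projectedConsensusStep ε D).exists_tendsto_of_affine_recursion
    (norm_projectedConsensusStep_le hε0.le hεn)
    (fun _ => projectedConsensusStep_eq_self_of_norm_eq hG hε0 hεn)
    (fun _ => inner_eq_zero_of_projectedConsensusStep_eq_self hc) hX

end SimpleGraph

theorem Submodule.starProjection_eq_of_forall_norm_sub_le {F : Type*} [NormedAddCommGroup F]
    [InnerProductSpace ℝ F] {K : Submodule ℝ F} [K.HasOrthogonalProjection] {u p : F}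
    (hp : p ∈ K) (hmin : ∀ q ∈ K, ‖u - p‖ ≤ ‖u - q‖) : K.starProjection u = p := by
  have hperp : inner ℝ (u - K.starProjection u) (K.starProjection u - p) = 0 := by
    rw [real_inner_comm]
    exact K.sub_starProjection_mem_orthogonal u _ (K.sub_mem (K.starProjection_apply_mem u) hp)
  have hpyth := norm_add_sq_eq_norm_sq_add_norm_sq_real hperp
  rw [sub_add_sub_cancel] at hpyth
  have := pow_le_pow_left₀ (norm_nonneg _) (hmin _ (K.starProjection_apply_mem u)) 2
  have : ‖K.starProjection u - p‖ ^ 2 = 0 := by nlinarith [sq_nonneg ‖K.starProjection u - p‖]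
  rwa [sq_eq_zero_iff, norm_eq_zero, sub_eq_zero] at this

theorem euclDist_eq_norm {N : ℕ} (x y : Fin N → ℝ) :
    euclDist x y = ‖toLp 2 (x - y)‖ := by
  simp [euclDist, EuclideanSpace.norm_eq]

theorem Matrix.setOf_mulVec_eq_eq_setOf_sub_mem_ker {κ : Type*} {d : ℕ}
    {H : Matrix κ (Fin d) ℝ} {z : κ → ℝ} {a : Fin d → ℝ} (ha : H.mulVec a = z) :
    {y | H.mulVec y = z} = {y | toLp 2 (y - a) ∈ LinearMap.ker (Matrix.toLpLin 2 2 H)} := by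
  ext y
  simp [← ha, sub_eq_zero]

namespace IsProjOn

variable {N : ℕ} {P : (Fin N → ℝ) → (Fin N → ℝ)} {a : Fin N → ℝ}
  {D : Submodule ℝ (EuclideanSpace ℝ (Fin N))}

theorem toLp_apply (hP : IsProjOn P {y | toLp 2 (y - a) ∈ D}) (w : Fin N → ℝ) :
    toLp 2 (P w) = D.starProjection (toLp 2 w) + Dᗮ.starProjection (toLp 2 a) := by
  have hproj : D.starProjection (toLp 2 (w - a)) = toLp 2 (P w - a) := by
    refine Submodule.starProjection_eq_of_forall_norm_sub_le (hP w).1 fun q hq => ?_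
    have := (hP w).2 (a + ofLp q) (by simpa using hq)
    simpa [euclDist_eq_norm, sub_sub_sub_cancel_right, sub_sub] using this
  rw [Submodule.starProjection_orthogonal_val, ← sub_add_cancel (toLp 2 (P w)) (toLp 2 a),
    ← WithLp.toLp_sub, ← hproj, WithLp.toLp_sub, map_sub]
  abel

theorem continuous {κ : Type*} {H : Matrix κ (Fin N) ℝ} {z : κ → ℝ}
    (hne : {y | H.mulVec y = z}.Nonempty) (hP : IsProjOn P {y | H.mulVec y = z}) :
    Continuous P := by
  obtain ⟨a, ha⟩ := hne
  have hPa := Matrix.setOf_mulVec_eq_eq_setOf_sub_mem_ker ha ▸ hP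
  have : P = fun w => ofLp ((LinearMap.ker (Matrix.toLpLin 2 2 H)).starProjection
      (toLp 2 w) + (LinearMap.ker (Matrix.toLpLin 2 2 H))ᗮ.starProjection
      (toLp 2 a)) := funext fun w => by rw [← hPa.toLp_apply]
  rw [this]
  fun_prop

end IsProjOn

theorem exists_tendsto_of_projectionConsensus {α κ : Type*} [Fintype α] {d : ℕ}
    {G : SimpleGraph α} [DecidableRel G.Adj] (hG : G.Connected) {ε : ℝ} (hε0 : 0 < ε)
    (hεn : ε * Fintype.card α ≤ 1) {H : α → Matrix κ (Fin d) ℝ} {z : α → κ → ℝ}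
    (hne : ∀ i, {y | (H i).mulVec y = z i}.Nonempty) {P : α → (Fin d → ℝ) → (Fin d → ℝ)}
    (hP : ∀ i, IsProjOn (P i) {y | (H i).mulVec y = z i}) {x : ℕ → α → Fin d → ℝ}
    (hx : ∀ t i, x (t + 1) i = P i (G.consensusStep ε (x t) i)) :
    ∃ y, Tendsto x atTop (𝓝 y) := by
  choose a ha using hne
  set D := fun i => LinearMap.ker (Matrix.toLpLin 2 2 (H i))
  have hPD : ∀ i, IsProjOn (P i) {y | toLp 2 (y - a i) ∈ D i} := fun i =>
    Matrix.setOf_mulVec_eq_eq_setOf_sub_mem_ker (ha i) ▸ hP i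
  set c : PiLp 2 (fun _ : α => EuclideanSpace ℝ (Fin d)) :=
    toLp 2 fun i => (D i)ᗮ.starProjection (toLp 2 (a i))
  set X : ℕ → PiLp 2 (fun _ : α => EuclideanSpace ℝ (Fin d)) :=
    fun t => toLp 2 fun i => toLp 2 (x t i)
  have hX : ∀ t, X (t + 1) = c + G.projectedConsensusStep ε D (X t) := fun t => by
    ext1 i
    simp only [X, PiLp.add_apply, SimpleGraph.projectedConsensusStep_apply]
    rw [hx, (hPD i).toLp_apply, add_comm]
    simp only [c, SimpleGraph.consensusStep, WithLp.toLp_add, WithLp.toLp_smul, WithLp.toLp_sum,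
      WithLp.toLp_sub]
  obtain ⟨Y, hY⟩ := SimpleGraph.exists_tendsto_of_projectedConsensus_recursion hG hε0 hεn
    (fun i => Submodule.starProjection_apply_mem _ _) hX
  refine ⟨fun i => ofLp (Y i), tendsto_pi_nhds.2 fun i => ?_⟩
  exact ((by fun_prop : Continuous fun Z : PiLp 2 (fun _ : α => EuclideanSpace ℝ (Fin d)) =>
    ofLp (Z i)).tendsto Y).comp hY

theorem stmt16_general (n d k : ℕ)
    (G : SimpleGraph (Fin n)) [DecidableRel G.Adj] (hG : G.Connected)
    (H : Fin n → Matrix (Fin k) (Fin d) ℝ) (z : Fin n → Fin k → ℝ)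
    (E : Fin n → Set (Fin d → ℝ))
    (hE : ∀ i, E i = {y | (H i).mulVec y = z i})
    (hEne : ∀ i, (E i).Nonempty)
    (hInt : ⋂ i, E i = ∅)
    (P : Fin n → (Fin d → ℝ) → (Fin d → ℝ))
    (hP : ∀ i, IsProjOn (P i) (E i))
    (ε : ℝ) (hε0 : 0 < ε) (hε1 : ε < 1 / n)
    (x : ℕ → Fin n → Fin d → ℝ)
    (hx : ∀ t i, x (t + 1) i =
      P i (x t i + ε • ∑ j ∈ G.neighborFinset i, (x t j - x t i))) :
    ∃ ystar : Fin n → Fin d → ℝ,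
      (∀ i, Filter.Tendsto (fun t => x t i) Filter.atTop (nhds (ystar i))) ∧
      ∃ j k : Fin n, ystar j ≠ ystar k := by
  obtain ⟨i₀, -⟩ := Set.iInter_eq_empty_iff.1 hInt 0
  have hεn : ε * Fintype.card (Fin n) ≤ 1 := by
    rw [Fintype.card_fin]
    exact ((lt_div_iff₀ (by exact_mod_cast i₀.pos)).1 hε1).le
  obtain ⟨y, hy⟩ := exists_tendsto_of_projectionConsensus hG hε0 hεn (fun i => hE i ▸ hEne i)
    (fun i => hE i ▸ hP i) hx
  refine ⟨y, tendsto_pi_nhds.1 hy, ?_⟩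
  have hfix : ∀ i, P i (G.consensusStep ε y i) = y i := congrFun <|
    eq_of_tendsto_of_forall_succ_eq (continuous_pi fun i =>
      ((hE i ▸ hP i).continuous (hE i ▸ hEne i)).comp
        (SimpleGraph.continuous_consensusStep_apply ε i))
      (fun t => funext (hx t)) hy
  by_contra! hcons
  have : y i₀ ∈ ⋂ i, E i := Set.mem_iInter.2 fun i => by
    rw [hcons i₀ i, ← hfix i, SimpleGraph.consensusStep_of_forall_eq ε hcons]
    exact (hP i _).1
  simp [hInt] at this

theorem stmt16 (n d k : ℕ) (hn : 0 < n)
    (G : SimpleGraph (Fin n)) [DecidableRel G.Adj] (hG : G.Connected)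
    (H : Fin n → Matrix (Fin k) (Fin d) ℝ) (z : Fin n → Fin k → ℝ)
    (E : Fin n → Set (Fin d → ℝ))
    (hE : ∀ i, E i = {y | (H i).mulVec y = z i})
    (hEne : ∀ i, (E i).Nonempty)
    (hInt : ⋂ i, E i = ∅)
    (P : Fin n → (Fin d → ℝ) → (Fin d → ℝ))
    (hP : ∀ i, IsProjOn (P i) (E i))
    (ε : ℝ) (hε0 : 0 < ε) (hε1 : ε < 1 / n)
    (x : ℕ → Fin n → Fin d → ℝ)
    (hx : ∀ t i, x (t + 1) i =
      P i (x t i + ε • ∑ j ∈ G.neighborFinset i, (x t j - x t i))) :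
    ∃ ystar : Fin n → Fin d → ℝ,
      (∀ i, Filter.Tendsto (fun t => x t i) Filter.atTop (nhds (ystar i))) ∧
      ∃ j k : Fin n, ystar j ≠ ystar k :=
  stmt16_general n d k G hG H z E hE hEne hInt P hP ε hε0 hε1 x hx
end
end
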